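/- The sum over all sets T of (k+1)-element subsets of [n] with |T| = m3 of det(∂̂_{•,T})² equals n^{m2}. (This is Kalai's weighted enumeration of ℚ-acyclic complexes, Σ_{T ∈ 𝒯_{n,k}} |H̃_{k−1}(T)|² = n^{C(n−2,k)}; the case k = 1 is Cayley's formula.) -/

import Mathlib

open Matrix

/-- The `j`-element subsets of the vertex set `[n]` (modelled as `Fin n`). -/
abbrev Face (n j : ℕ) := {s : Finset (Fin n) // s.card = j}

/-- The `j`-element subsets of `[n]` not containing the last vertex `n`
(the vertex of `Fin n` with value `n - 1`). -/
abbrev HFace (n j : ℕ) :=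
  {s : Finset (Fin n) // s.card = j ∧ ∀ a ∈ s, (a : ℕ) < n - 1}

/-- The `k`-dimensional boundary matrix `∂`: rows indexed by `k`-subsets `σ`,
columns by `(k+1)`-subsets `τ`; the entry is `(-1)^m` if `σ = τ \ {τ_m}`
(where `τ = {τ_0 < ⋯ < τ_k}`), and `0` otherwise. -/
noncomputable def bdry (n k : ℕ) : Matrix (Face n k) (Face n (k+1)) ℝ :=
  fun σ τ => ∑ a ∈ τ.1,
    if σ.1 = τ.1.erase a then (-1 : ℝ) ^ ((τ.1.filter (fun b => b < a)).card) else 0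

/-- The submatrix `∂̂` of `∂` consisting of the rows indexed by `k`-subsets
not containing the vertex `n`. -/
noncomputable def bdryHat (n k : ℕ) : Matrix (HFace n k) (Face n (k+1)) ℝ :=
  fun σ τ => bdry n k ⟨σ.1, σ.2.1⟩ τ

/-- The submatrix `M_{•,T}` of `M` with columns restricted to `T`. -/
def colSub {ι κ : Type*} (M : Matrix ι κ ℝ) (T : Finset κ) :
    Matrix ι {τ // τ ∈ T} ℝ :=
  fun i t => M i t.1

/- The squared determinant of a matrix whose row and column index types are in
bijection (`0` if there is no bijection); independent of the chosen bijection. -/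
open scoped Classical in
noncomputable def detSq {ι κ : Type*} [Fintype ι] [DecidableEq ι] [Fintype κ]
    (M : Matrix ι κ ℝ) : ℝ :=
  if h : Nonempty (ι ≃ κ) then ((M.submatrix id h.some).det) ^ 2 else 0

/-- The degree `d_i(T)`: the number of members of `T` containing the vertex `i`. -/
def deg (n k : ℕ) (T : Finset (Face n (k+1))) (i : Fin n) : ℕ :=
  (T.filter (fun τ => i ∈ τ.1)).card

/-- The diagonal matrix `X_j` indexed by `j`-subsets, with entries `∏_{i∈σ} x_i`. -/
noncomputable def Xdiag (n j : ℕ) (x : Fin n → ℝ) :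
    Matrix (Face n j) (Face n j) ℝ :=
  Matrix.diagonal (fun σ => ∏ i ∈ σ.1, x i)

/-!
By Cauchy–Binet the sum equals `det (∂̂ ∂̂ᵀ)`. The columns of `∂̂` through the vertex `n`
contribute the identity to `∂̂ ∂̂ᵀ`, and the remaining columns form the boundary matrix `∂` of the
simplex on `[n - 1]`, so `det (∂̂ ∂̂ᵀ) = det (1 + ∂ ∂ᵀ)`. On the full simplex with `N` vertices,
`∂ ∂ = 0` and the Laplacian `∂_{j+1} ∂_{j+1}ᵀ + ∂_jᵀ ∂_j` is `N • 1`, hence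
`(1 + ∂_{j+1} ∂_{j+1}ᵀ) (1 + ∂_jᵀ ∂_j) = (N + 1) • 1`; since
`det (1 + ∂_jᵀ ∂_j) = det (1 + ∂_j ∂_jᵀ)`, induction on `j` gives
`det (1 + ∂_j ∂_jᵀ) = (N + 1) ^ C(N - 1, j)`.
-/

open Finset

section InsertSign

variable {α : Type*} [LinearOrder α]

def insertSign (s : Finset α) (a : α) : ℝ := (-1) ^ #{b ∈ s | b < a}

lemma insertSign_mul_self (s : Finset α) (a : α) :
    insertSign s a * insertSign s a = 1 := by
  rw [insertSign, ← mul_pow]; norm_num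

lemma insertSign_insert {s : Finset α} {a b : α} (ha : a ∉ s) :
    insertSign (insert a s) b = (if a < b then -1 else 1) * insertSign s b := by
  unfold insertSign
  rw [filter_insert]
  split_ifs
  · rw [card_insert_of_notMem (fun h => ha (mem_filter.1 h).1), pow_succ, mul_comm]
  · rw [one_mul]

lemma insertSign_mul_insertSign_insert {s : Finset α} {a b : α} (ha : a ∉ s)
    (hb : b ∉ s) (hab : a ≠ b) :
    insertSign s a * insertSign (insert a s) b = -(insertSign s b * insertSign (insert b s) a) := by
  rw [insertSign_insert ha, insertSign_insert hb]
  rcases hab.lt_or_gt with h | h <;> simp [h, h.not_gt] <;> ring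

end InsertSign

section Boundary

variable {n : ℕ}

lemma Face.eq_of_subset {j : ℕ} {s t : Face n j} (h : s.1 ⊆ t.1) : s = t :=
  Subtype.ext (eq_of_subset_of_card_le h (by rw [s.2, t.2]))

variable {k : ℕ}

lemma bdry_eq_zero_of_not_subset {σ : Face n k} {τ : Face n (k+1)} (h : ¬ σ.1 ⊆ τ.1) :
    bdry n k σ τ = 0 :=
  sum_eq_zero fun a _ => if_neg fun he => h (by rw [he]; exact erase_subset a τ.1)

lemma bdry_of_eq_insert {σ : Face n k} {τ : Face n (k+1)} {a : Fin n} (ha : a ∉ σ.1)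
    (h : τ.1 = insert a σ.1) : bdry n k σ τ = insertSign σ.1 a := by
  unfold bdry
  rw [sum_eq_single_of_mem a (by simp [h]), if_pos (by rw [h, erase_insert ha]), h,
    filter_insert, if_neg (lt_irrefl a), insertSign]
  intro b _ hba
  refine if_neg fun hσ => ha ?_
  rw [hσ]
  exact mem_erase.2 ⟨hba.symm, by simp [h]⟩

lemma exists_eq_insert_of_subset {σ : Face n k} {τ : Face n (k+1)} (h : σ.1 ⊆ τ.1) :
    ∃ a ∉ σ.1, τ.1 = insert a σ.1 := by
  obtain ⟨a, ha, he⟩ := exists_eq_insert_iff.2 ⟨h, by rw [σ.2, τ.2]⟩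
  exact ⟨a, ha, he.symm⟩

lemma bdry_mul_self (σ : Face n k) (τ : Face n (k+1)) :
    bdry n k σ τ * bdry n k σ τ = if σ.1 ⊆ τ.1 then 1 else 0 := by
  split_ifs with h
  · obtain ⟨a, ha, hτ⟩ := exists_eq_insert_of_subset h
    rw [bdry_of_eq_insert ha hτ, insertSign_mul_self]
  · rw [bdry_eq_zero_of_not_subset h, zero_mul]

lemma bdry_mul_bdry_eq_zero {l : ℕ} {σ : Face n k} {τ : Face n (k+1)} {σ' : Face n l}
    {τ' : Face n (l+1)} (h : ¬ (σ.1 ⊆ τ.1 ∧ σ'.1 ⊆ τ'.1)) : bdry n k σ τ * bdry n l σ' τ' = 0 := by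
  rcases not_and_or.1 h with h | h
  · rw [bdry_eq_zero_of_not_subset h, zero_mul]
  · rw [bdry_eq_zero_of_not_subset h, mul_zero]

lemma card_filter_superset (σ : Face n k) : #{τ : Face n (k+1) | σ.1 ⊆ τ.1} = n - k := by
  rw [show n - k = #σ.1ᶜ by rw [card_compl, σ.2, Fintype.card_fin]]
  symm
  refine card_bij
    (fun a ha => ⟨insert a σ.1, by rw [card_insert_of_notMem (mem_compl.1 ha), σ.2]⟩)
    (fun a _ => by simp)
    (fun a ha b _ hab => (insert_inj (mem_compl.1 ha)).1 (congrArg Subtype.val hab))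
    (fun τ hτ => ?_)
  obtain ⟨a, ha, hτ⟩ := exists_eq_insert_of_subset (mem_filter.1 hτ).2
  exact ⟨a, mem_compl.2 ha, Subtype.ext hτ.symm⟩

lemma card_filter_subset (σ : Face n (k+1)) : #{ρ : Face n k | ρ.1 ⊆ σ.1} = k + 1 := by
  refine (card_bij (t := σ.1.powersetCard k) (fun ρ _ => ρ.1) (fun ρ hρ => ?_)
    (fun ρ _ ρ' _ h => Subtype.ext h) (fun s hs => ?_)).trans ?_
  · exact mem_powersetCard.2 ⟨(mem_filter.1 hρ).2, ρ.2⟩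
  · obtain ⟨hs, hcard⟩ := mem_powersetCard.1 hs
    exact ⟨⟨s, hcard⟩, by simp [hs], rfl⟩
  · rw [card_powersetCard, σ.2, Nat.choose_succ_self_right]

end Boundary

section Laplacian

variable {n : ℕ}

lemma sum_bdry_mul_self_row {k : ℕ} (σ : Face n k) :
    ∑ τ : Face n (k+1), bdry n k σ τ * bdry n k σ τ = (n - k : ℕ) := by
  simp_rw [bdry_mul_self]
  rw [sum_boole, card_filter_superset]

lemma sum_bdry_mul_self_col {k : ℕ} (σ : Face n (k+1)) :
    ∑ ρ : Face n k, bdry n k ρ σ * bdry n k ρ σ = k + 1 := by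
  simp_rw [bdry_mul_self]
  rw [sum_boole, card_filter_subset]
  push_cast; rfl

variable {m : ℕ}

lemma laplacian_apply_of_eq_insert {ρ : Face n m} {σ σ' : Face n (m+1)} {a b : Fin n}
    (ha : a ∉ ρ.1) (hb : b ∉ ρ.1) (hab : a ≠ b) (hσ : σ.1 = insert a ρ.1)
    (hσ' : σ'.1 = insert b ρ.1) :
    ∑ τ : Face n (m+2), bdry n (m+1) σ τ * bdry n (m+1) σ' τ
      + ∑ ρ' : Face n m, bdry n m ρ' σ * bdry n m ρ' σ' = 0 := by
  have hbσ : b ∉ σ.1 := by simp [hσ, hab.symm, hb]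
  have haσ' : a ∉ σ'.1 := by simp [hσ', hab, ha]
  let τ₀ : Face n (m+2) := ⟨insert b σ.1, by rw [card_insert_of_notMem hbσ, σ.2]⟩
  have hτ₀ : τ₀.1 = insert a σ'.1 := by simp only [τ₀]; rw [hσ, hσ', insert_comm]
  have hsum_up : ∑ τ : Face n (m+2), bdry n (m+1) σ τ * bdry n (m+1) σ' τ
      = insertSign σ.1 b * insertSign σ'.1 a := by
    rw [Fintype.sum_eq_single τ₀ fun τ hτ => bdry_mul_bdry_eq_zero fun ⟨h, h'⟩ =>
        hτ (Face.eq_of_subset (insert_subset (h' (by simp [hσ'])) h)).symm,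
      bdry_of_eq_insert hbσ rfl, bdry_of_eq_insert haσ' hτ₀]
  have hsum_down : ∑ ρ' : Face n m, bdry n m ρ' σ * bdry n m ρ' σ'
      = insertSign ρ.1 a * insertSign ρ.1 b := by
    have hsub : ∀ ρ' : Face n m, ρ'.1 ⊆ σ.1 → ρ'.1 ⊆ σ'.1 → ρ'.1 ⊆ ρ.1 := by
      intro ρ' h h' x hx
      have h1 := h hx
      have h2 := h' hx
      rw [hσ, mem_insert] at h1
      rw [hσ', mem_insert] at h2
      grind
    rw [Fintype.sum_eq_single ρ fun ρ' hρ' => bdry_mul_bdry_eq_zero fun ⟨h, h'⟩ =>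
        hρ' (Face.eq_of_subset (hsub ρ' h h')),
      bdry_of_eq_insert ha hσ, bdry_of_eq_insert hb hσ']
  rw [hsum_up, hsum_down, hσ, hσ']
  linear_combination insertSign ρ.1 b * insertSign (insert a ρ.1) b *
      insertSign_mul_insertSign_insert ha hb hab
    - insertSign ρ.1 a * insertSign ρ.1 b * insertSign_mul_self (insert a ρ.1) b
    - insertSign (insert a ρ.1) b * insertSign (insert b ρ.1) a * insertSign_mul_self ρ.1 b

lemma laplacian_apply_of_card_inter_lt {σ σ' : Face n (m+1)} (h : #(σ.1 ∩ σ'.1) < m) :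
    ∑ τ : Face n (m+2), bdry n (m+1) σ τ * bdry n (m+1) σ' τ
      + ∑ ρ : Face n m, bdry n m ρ σ * bdry n m ρ σ' = 0 := by
  rw [sum_eq_zero, sum_eq_zero, add_zero]
  · refine fun ρ _ => bdry_mul_bdry_eq_zero fun ⟨h1, h2⟩ => ?_
    have := card_le_card (subset_inter h1 h2)
    rw [ρ.2] at this
    omega
  · refine fun τ _ => bdry_mul_bdry_eq_zero fun ⟨h1, h2⟩ => ?_
    have := card_le_card (union_subset h1 h2)
    have := card_union_add_card_inter σ.1 σ'.1
    rw [τ.2, σ.2, σ'.2] at *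
    omega

lemma laplacian_apply (σ σ' : Face n (m+1)) :
    ∑ τ : Face n (m+2), bdry n (m+1) σ τ * bdry n (m+1) σ' τ
      + ∑ ρ : Face n m, bdry n m ρ σ * bdry n m ρ σ' = if σ = σ' then (n : ℝ) else 0 := by
  split_ifs with h
  · subst h
    have := card_le_univ σ.1
    rw [σ.2, Fintype.card_fin] at this
    rw [sum_bdry_mul_self_row, sum_bdry_mul_self_col]
    push_cast [this]
    ring
  have hlt : #(σ.1 ∩ σ'.1) < m + 1 := (card_lt_card (s := σ.1 ∩ σ'.1) (t := σ.1)
    ⟨inter_subset_left, fun hs => h (Face.eq_of_subset (hs.trans inter_subset_right))⟩).trans_eq σ.2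
  rcases (Nat.lt_succ_iff.1 hlt).lt_or_eq with hc | hc
  · exact laplacian_apply_of_card_inter_lt hc
  obtain ⟨a, ha, hσ⟩ := exists_eq_insert_iff.2 ⟨inter_subset_left, by rw [hc, σ.2]⟩
  obtain ⟨b, hb, hσ'⟩ := exists_eq_insert_iff.2 ⟨inter_subset_right, by rw [hc, σ'.2]⟩
  have hab : a ≠ b := by
    rintro rfl
    exact h (Subtype.ext (hσ.symm.trans hσ'))
  exact laplacian_apply_of_eq_insert (ρ := ⟨σ.1 ∩ σ'.1, hc⟩) ha hb hab hσ.symm hσ'.symm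

lemma bdry_mul_bdry_apply (ρ : Face n m) (τ : Face n (m+2)) :
    ∑ σ : Face n (m+1), bdry n m ρ σ * bdry n (m+1) σ τ = 0 := by
  by_cases hρτ : ρ.1 ⊆ τ.1
  swap
  · exact sum_eq_zero fun σ _ => bdry_mul_bdry_eq_zero fun ⟨h1, h2⟩ => hρτ (h1.trans h2)
  obtain ⟨a, b, hab, he⟩ := card_eq_two.1
    (show #(τ.1 \ ρ.1) = 2 by rw [card_sdiff_of_subset hρτ, ρ.2, τ.2]; omega)
  have ha : a ∉ ρ.1 := (mem_sdiff.1 (he ▸ mem_insert_self a {b})).2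
  have hb : b ∉ ρ.1 := (mem_sdiff.1 (he ▸ mem_insert_of_mem (mem_singleton_self b))).2
  have hτ : τ.1 = insert a (insert b ρ.1) := by
    rw [← union_sdiff_of_subset hρτ, he]
    ext x; simp only [mem_union, mem_insert, mem_singleton]; tauto
  let σa : Face n (m+1) := ⟨insert a ρ.1, by rw [card_insert_of_notMem ha, ρ.2]⟩
  let σb : Face n (m+1) := ⟨insert b ρ.1, by rw [card_insert_of_notMem hb, ρ.2]⟩
  have hne : σa ≠ σb := fun h => hab ((insert_inj ha).1 (congrArg Subtype.val h))
  have hbetween : ∀ σ : Face n (m+1), ρ.1 ⊆ σ.1 → σ.1 ⊆ τ.1 → σ = σa ∨ σ = σb := by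
    intro σ hρσ hστ
    obtain ⟨x, hx, hσ⟩ := exists_eq_insert_of_subset hρσ
    have : x ∈ τ.1 \ ρ.1 := mem_sdiff.2 ⟨hστ (by simp [hσ]), hx⟩
    rw [he, mem_insert, mem_singleton] at this
    rcases this with rfl | rfl
    · exact .inl (Subtype.ext hσ)
    · exact .inr (Subtype.ext hσ)
  rw [Fintype.sum_eq_add σa σb hne fun σ ⟨h1, h2⟩ => bdry_mul_bdry_eq_zero fun ⟨hρσ, hστ⟩ =>
      (hbetween σ hρσ hστ).elim h1 h2,
    bdry_of_eq_insert ha rfl, bdry_of_eq_insert hb rfl,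
    bdry_of_eq_insert (a := b) (by simp [σa, hab.symm, hb]) (by rw [hτ, insert_comm]),
    bdry_of_eq_insert (a := a) (by simp [σb, hab, ha]) hτ]
  linear_combination insertSign_mul_insertSign_insert ha hb hab

end Laplacian

section CauchyBinet

open Function

lemma detSq_eq_det_submatrix_sq {ι κ : Type*} [Fintype ι] [DecidableEq ι] [Fintype κ]
    (M : Matrix ι κ ℝ) (e : ι ≃ κ) : detSq M = det (M.submatrix id e) ^ 2 := by
  rw [detSq, dif_pos ⟨e⟩, show M.submatrix id (⟨e⟩ : Nonempty (ι ≃ κ)).some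
    = (M.submatrix id e).submatrix id ((⟨e⟩ : Nonempty (ι ≃ κ)).some.trans e.symm) by
      ext; simp, det_permute']
  rcases Int.units_eq_one_or (Equiv.Perm.sign ((⟨e⟩ : Nonempty (ι ≃ κ)).some.trans e.symm))
    with h | h <;> simp [h]

variable {ι κ R : Type*} [Fintype ι] [DecidableEq ι] [CommRing R]

lemma det_submatrix_eq_zero_of_not_injective (M : Matrix ι κ R) {p : ι → κ}
    (hp : ¬ Injective p) : det (M.submatrix id p) = 0 := by
  obtain ⟨i, j, hij, hne⟩ : ∃ i j, p i = p j ∧ i ≠ j := by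
    simpa [Injective] using hp
  exact det_zero_of_column_eq hne fun k => by simp [hij]

variable [Fintype κ]

lemma det_mul_eq_sum_prod_mul_det_submatrix (M : Matrix ι κ R) (N : Matrix κ ι R) :
    det (M * N) = ∑ p : ι → κ, (∏ i, N (p i) i) * det (M.submatrix id p) := by
  simp only [det_apply', mul_apply, prod_univ_sum, mul_sum, submatrix_apply, id]
  rw [sum_comm]
  refine sum_congr rfl fun p _ => sum_congr rfl fun σ _ => ?_
  rw [prod_mul_distrib]
  ring

variable [DecidableEq κ]

lemma sum_image_eq_prod_mul_det_submatrix_eq_sq (M : Matrix ι κ R) {T : Finset κ} (e : ι ≃ T) :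
    ∑ p : ι → κ with image p univ = T, (∏ i, M i (p i)) * det (M.submatrix id p)
      = det (M.submatrix id (fun i => (e i : κ))) ^ 2 := by
  set A := M.submatrix id (fun i => (e i : κ))
  have hperm : ∀ π : Equiv.Perm ι,
      (∏ i, M i (e (π i))) * det (M.submatrix id (fun i => (e (π i) : κ)))
        = det A * (((Equiv.Perm.sign π : ℤ) : R) * ∏ i, Aᵀ (π i) i) := by
    intro π
    rw [show M.submatrix id (fun i => (e (π i) : κ)) = A.submatrix id π from rfl, det_permute']
    simp only [transpose_apply, A, submatrix_apply, id]
    ring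
  rw [show det A ^ 2 = det A * det Aᵀ by rw [det_transpose, sq], det_apply' Aᵀ, mul_sum]
  symm
  refine sum_bij (fun π _ i => (e (π i) : κ)) (fun π _ => ?_) (fun π₁ _ π₂ _ h => ?_)
    (fun p hp => ?_) (fun π _ => (hperm π).symm)
  · refine mem_filter.2 ⟨mem_univ _, ?_⟩
    ext x
    simp only [mem_univ, true_and, mem_image]
    exact ⟨fun ⟨i, hi⟩ => hi ▸ (e (π i)).2,
      fun hx => ⟨π.symm (e.symm ⟨x, hx⟩), by simp⟩⟩
  · exact Equiv.ext fun i => e.injective (Subtype.ext (congrFun h i))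
  · have himage : image p univ = T := (mem_filter.1 hp).2
    have hmem : ∀ i, p i ∈ T := fun i => himage ▸ mem_image_of_mem p (mem_univ i)
    have hinj : Injective p := by
      have : #(image p univ) = #(univ : Finset ι) := by
        rw [himage, card_univ, ← Fintype.card_coe T, Fintype.card_congr e]
      exact fun i j h => card_image_iff.1 this (mem_univ i) (mem_univ j) h
    have hinj' : Injective fun i => e.symm ⟨p i, hmem i⟩ := fun i j h =>
      hinj (congrArg Subtype.val (e.symm.injective h))
    exact ⟨Equiv.ofBijective _ (Finite.injective_iff_bijective.1 hinj'), mem_univ _,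
      funext fun i => by simp⟩

theorem sum_detSq_colSub_eq_det_mul_transpose (M : Matrix ι κ ℝ) :
    ∑ T : Finset κ with T.card = Fintype.card ι, detSq (colSub M T) = det (M * Mᵀ) := by
  rw [det_mul_eq_sum_prod_mul_det_submatrix, ← sum_fiberwise univ (fun p => image p univ)]
  simp only [transpose_apply]
  symm
  rw [← sum_filter_of_ne (p := fun T : Finset κ => T.card = Fintype.card ι) fun T _ hT => ?_]
  · refine sum_congr rfl fun T hT => ?_
    let e := Fintype.equivOfCardEq (α := ι) (β := T) (by simp [(mem_filter.1 hT).2])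
    rw [sum_image_eq_prod_mul_det_submatrix_eq_sq M e, detSq_eq_det_submatrix_sq _ e]
    rfl
  obtain ⟨p, hp, hpT⟩ := exists_ne_zero_of_sum_ne_zero hT
  have hinj : Injective p := by
    by_contra h
    rw [det_submatrix_eq_zero_of_not_injective M h, mul_zero] at hpT
    exact hpT rfl
  rw [← (mem_filter.1 hp).2, card_image_of_injective _ hinj, card_univ]

end CauchyBinet

theorem det_one_add_mul_transpose_mul_det_of_mul_eq_zero {α β γ R : Type*}
    [Fintype α] [DecidableEq α] [Fintype β] [DecidableEq β] [Fintype γ] [DecidableEq γ]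
    [CommRing R] (A : Matrix α β R) (B : Matrix β γ R) (hAB : A * B = 0) (c : R)
    (hL : B * Bᵀ + Aᵀ * A = c • 1) :
    det (1 + B * Bᵀ) * det (1 + A * Aᵀ) = (1 + c) ^ Fintype.card β := by
  have hBA : Bᵀ * Aᵀ = 0 := by rw [← transpose_mul, hAB, transpose_zero]
  have hprod : (1 + B * Bᵀ) * (1 + Aᵀ * A) = (1 + c) • (1 : Matrix β β R) :=
    calc (1 + B * Bᵀ) * (1 + Aᵀ * A) = 1 + (B * Bᵀ + Aᵀ * A) + B * Bᵀ * (Aᵀ * A) := by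
          noncomm_ring
      _ = (1 + c) • 1 := by
          rw [hL, Matrix.mul_assoc B, ← Matrix.mul_assoc Bᵀ, hBA, Matrix.zero_mul,
            Matrix.mul_zero, add_zero, add_smul, one_smul]
  rw [det_one_add_mul_comm A, ← det_mul, hprod, det_smul, det_one, mul_one]

theorem bdry_mul_transpose_add_transpose_mul (n m : ℕ) :
    bdry n (m+1) * (bdry n (m+1))ᵀ + (bdry n m)ᵀ * bdry n m = (n : ℝ) • 1 := by
  ext σ σ'
  simp only [Matrix.add_apply, mul_apply, transpose_apply, laplacian_apply, Matrix.smul_apply,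
    one_apply, smul_eq_mul, mul_ite, mul_one, mul_zero]

theorem bdry_mul_bdry (n m : ℕ) : bdry n m * bdry n (m+1) = 0 := by
  ext ρ τ
  exact bdry_mul_bdry_apply ρ τ

instance (n : ℕ) : Unique (Face n 0) where
  default := ⟨∅, card_empty⟩
  uniq σ := Subtype.ext (card_eq_zero.1 σ.2)

theorem det_one_add_bdry_mul_transpose (n j : ℕ) :
    det (1 + bdry n j * (bdry n j)ᵀ) = ((n : ℝ) + 1) ^ (n - 1).choose j := by
  induction j with
  | zero =>
    rw [det_unique, Matrix.add_apply, one_apply_eq, mul_apply]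
    simp only [transpose_apply, sum_bdry_mul_self_row, Nat.sub_zero, Nat.choose_zero_right,
      pow_one]
    ring
  | succ m ih =>
    have h := det_one_add_mul_transpose_mul_det_of_mul_eq_zero _ _ (bdry_mul_bdry n m) _
      (bdry_mul_transpose_add_transpose_mul n m)
    rw [ih, Fintype.card_finset_len, Fintype.card_fin, add_comm (1 : ℝ)] at h
    rcases n with _ | n
    · -- no vertices: the base `0 + 1` is `1`, whatever the truncated exponent
      simpa using h
    have hne : ((n + 1 : ℕ) : ℝ) + 1 ≠ 0 := by positivity
    rw [Nat.add_sub_cancel] at h ⊢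
    rw [Nat.choose_succ_succ', pow_add, mul_comm] at h
    exact mul_left_cancel₀ (pow_ne_zero _ hne) h

section Transport

variable {n : ℕ}

def liftFace {j : ℕ} (σ : Face n j) : Face (n+1) j :=
  ⟨σ.1.map Fin.castSuccEmb, by rw [card_map, σ.2]⟩

lemma last_notMem_liftFace {j : ℕ} (σ : Face n j) : Fin.last n ∉ (liftFace σ).1 := by
  simp [liftFace, Fin.castSucc_ne_last]

lemma liftFace_injective {j : ℕ} : Function.Injective (liftFace (n := n) (j := j)) :=
  fun _ _ h => Subtype.ext (map_injective _ (congrArg Subtype.val h))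

lemma exists_liftFace_eq {j : ℕ} {τ : Face (n+1) j} (h : Fin.last n ∉ τ.1) :
    ∃ σ, liftFace σ = τ := by
  have hsub : τ.1 ⊆ univ.map Fin.castSuccEmb := fun x hx => by
    rw [← Fin.Iio_last_eq_map, mem_Iio, Fin.lt_last_iff_ne_last]
    exact ne_of_mem_of_not_mem hx h
  obtain ⟨u, -, hu⟩ := subset_map_iff.1 hsub
  exact ⟨⟨u, by rw [← card_map Fin.castSuccEmb, ← hu, τ.2]⟩, Subtype.ext hu.symm⟩

lemma bdry_liftFace {k : ℕ} (σ : Face n k) (τ : Face n (k+1)) :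
    bdry (n+1) k (liftFace σ) (liftFace τ) = bdry n k σ τ := by
  unfold bdry liftFace
  dsimp only
  rw [sum_map]
  refine sum_congr rfl fun a _ => ?_
  have herase : σ.1.map Fin.castSuccEmb = (τ.1.map Fin.castSuccEmb).erase (Fin.castSuccEmb a)
      ↔ σ.1 = τ.1.erase a := by
    rw [← Finset.map_erase, Finset.map_inj]
  have hbelow : #{b ∈ τ.1.map Fin.castSuccEmb | b < Fin.castSuccEmb a} = #{b ∈ τ.1 | b < a} := by
    rw [filter_map, card_map]
    simp only [Function.comp_def, Fin.castSuccEmb_apply, Fin.castSucc_lt_castSucc_iff]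
  simp only [herase, hbelow]

noncomputable def hfaceEquiv (n j : ℕ) : Face n j ≃ HFace (n+1) j :=
  Equiv.ofBijective (fun σ => ⟨(liftFace σ).1, (liftFace σ).2, by simp [liftFace]⟩)
    ⟨fun _ _ h => liftFace_injective (Subtype.ext (congrArg Subtype.val h :)), fun s => by
      obtain ⟨σ, hσ⟩ := exists_liftFace_eq (τ := ⟨s.1, s.2.1⟩) fun h => by simpa using s.2.2 _ h
      exact ⟨σ, Subtype.ext (congrArg Subtype.val hσ :)⟩⟩

variable {k : ℕ}

lemma sum_filter_last_mem_bdry_liftFace_mul (σ σ' : Face n k) :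
    ∑ τ : Face (n+1) (k+1) with Fin.last n ∈ τ.1,
      bdry (n+1) k (liftFace σ) τ * bdry (n+1) k (liftFace σ') τ = if σ = σ' then 1 else 0 := by
  have hσ := last_notMem_liftFace σ
  let τ₀ : Face (n+1) (k+1) :=
    ⟨insert (Fin.last n) (liftFace σ).1, by rw [card_insert_of_notMem hσ, (liftFace σ).2]⟩
  have hvanish : ∀ τ ∈ ({τ | Fin.last n ∈ τ.1} : Finset (Face (n+1) (k+1))), τ ≠ τ₀ →
      bdry (n+1) k (liftFace σ) τ * bdry (n+1) k (liftFace σ') τ = 0 := by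
    intro τ hτ hne
    refine bdry_mul_bdry_eq_zero fun ⟨h, _⟩ => hne ?_
    obtain ⟨x, hx, hτx⟩ := exists_eq_insert_of_subset h
    have hlast := (mem_filter.1 hτ).2
    rw [hτx, mem_insert] at hlast
    obtain rfl := hlast.resolve_right hσ
    exact Subtype.ext hτx
  rw [sum_eq_single_of_mem τ₀ (by simp [τ₀]) hvanish, bdry_of_eq_insert hσ rfl]
  split_ifs with h
  · subst h
    rw [bdry_of_eq_insert hσ rfl, insertSign_mul_self]
  · have hsub : ¬ (liftFace σ').1 ⊆ τ₀.1 := fun hsub => h (liftFace_injective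
      (Face.eq_of_subset ((subset_insert_iff_of_notMem (last_notMem_liftFace σ')).1 hsub)).symm)
    rw [bdry_eq_zero_of_not_subset hsub, mul_zero]

lemma sum_filter_last_notMem_bdry_liftFace_mul (σ σ' : Face n k) :
    ∑ τ : Face (n+1) (k+1) with Fin.last n ∉ τ.1,
      bdry (n+1) k (liftFace σ) τ * bdry (n+1) k (liftFace σ') τ
      = ∑ τ : Face n (k+1), bdry n k σ τ * bdry n k σ' τ := by
  symm
  refine sum_nbij liftFace (fun τ _ => mem_filter.2 ⟨mem_univ _, last_notMem_liftFace τ⟩)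
    liftFace_injective.injOn (fun τ hτ => ?_) (fun τ _ => by rw [bdry_liftFace, bdry_liftFace])
  obtain ⟨τ', h⟩ := exists_liftFace_eq (mem_filter.1 hτ).2
  exact ⟨τ', mem_univ _, h⟩

theorem bdryHat_mul_transpose (n k : ℕ) :
    bdryHat (n+1) k * (bdryHat (n+1) k)ᵀ
      = (1 + bdry n k * (bdry n k)ᵀ).submatrix (hfaceEquiv n k).symm (hfaceEquiv n k).symm := by
  ext s s'
  obtain ⟨σ, rfl⟩ := (hfaceEquiv n k).surjective s
  obtain ⟨σ', rfl⟩ := (hfaceEquiv n k).surjective s'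
  simp only [mul_apply, transpose_apply, submatrix_apply, Equiv.symm_apply_apply,
    Matrix.add_apply, one_apply]
  rw [← sum_filter_add_sum_filter_not univ (fun τ => Fin.last n ∈ τ.1)]
  exact congrArg₂ (· + ·) (sum_filter_last_mem_bdry_liftFace_mul σ σ')
    (sum_filter_last_notMem_bdry_liftFace_mul σ σ')

end Transport

theorem weighted_count_general (n k : ℕ) (hn : k < n) :
    ∑ T ∈ Finset.univ.filter
        (fun T : Finset (Face n (k+1)) => T.card = (n-1).choose k),
        detSq (colSub (bdryHat n k) T)
      = (n : ℝ) ^ ((n-2).choose k) := by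
  obtain ⟨n, rfl⟩ : ∃ m, n = m + 1 := ⟨n - 1, by omega⟩
  have hcard : (n + 1 - 1).choose k = Fintype.card (HFace (n+1) k) := by
    rw [← Fintype.card_congr (hfaceEquiv n k), Fintype.card_finset_len, Fintype.card_fin,
      Nat.add_sub_cancel]
  rw [hcard, sum_detSq_colSub_eq_det_mul_transpose, bdryHat_mul_transpose,
    det_submatrix_equiv_self, det_one_add_bdry_mul_transpose, show n + 1 - 2 = n - 1 by omega]
  push_cast
  ring

/-- Kalai's weighted enumeration of ℚ-acyclic complexes:
`Σ_{T ∈ 𝒯_{n,k}} |H̃_{k−1}(T)|² = n^{C(n−2,k)}`. -/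
theorem weighted_count (n k : ℕ) (hk : 1 ≤ k) (hn : k < n) :
    ∑ T ∈ Finset.univ.filter
        (fun T : Finset (Face n (k+1)) => T.card = (n-1).choose k),
        detSq (colSub (bdryHat n k) T)
      = (n : ℝ) ^ ((n-2).choose k) :=
  weighted_count_general n k hn
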